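/- arXiv:2003.08106 — 2 statements merged into one kernel-verified Lean document; each statement's English description precedes it below -/
import Mathlib

section
/- With q_ε as above, for all t > 0 one has t·q_ε'(t) ≥ (1/4)·q_ε(t)²/t. -/
/-! The derivative of `q_ε` is the weight `f(s) = χ(εs) + (1 - χ(εs))/(εs)`, a convex
combination of `1` and `1/(εs)`, so `t f(t) ≥ min(t, 1/ε)`. Since `0 ≤ f ≤ 1` on `[0, ∞)` and
`f(s) = 1/(εs)` once `εs ≥ 2`, we get `q(t) ≤ t` and, for `εt ≥ 1`, `q(t) ≤ (2 + log(εt))/ε`.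
Below `t = 1/ε` the claim is `q² ≤ 4t²`; above it, it reduces to `(2 + log s)² ≤ 4s` for
`s ≥ 1`, which is `log √s ≤ √s - 1`. -/

open Real intervalIntegral

theorem sq_two_add_log_le {s : ℝ} (hs : 1 ≤ s) : (2 + log s) ^ 2 ≤ 4 * s := by
  have hs₀ : 0 < s := by linarith
  have hlog : log s = 2 * log √s := by rw [log_sqrt hs₀.le]; ring
  have hle : 2 + log s ≤ 2 * √s := by
    linarith [log_le_sub_one_of_pos (sqrt_pos.mpr hs₀)]
  have hnonneg : 0 ≤ 2 + log s := by linarith [log_nonneg hs]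
  nlinarith [sq_sqrt hs₀.le]

/-- The integrand of `q_ε`. -/
noncomputable def cutoffWeight (χ : ℝ → ℝ) (ε s : ℝ) : ℝ :=
  χ (ε * s) + (1 - χ (ε * s)) / (ε * s)

section cutoffWeight

variable {χ : ℝ → ℝ} {ε s : ℝ}

theorem cutoffWeight_eq_one (hχ1 : ∀ t : ℝ, |t| ≤ 1 → χ t = 1) (hs : |ε * s| ≤ 1) :
    cutoffWeight χ ε s = 1 := by
  simp [cutoffWeight, hχ1 _ hs]

theorem cutoffWeight_eq_inv (hχ0 : ∀ t : ℝ, 2 ≤ |t| → χ t = 0) (hs : 2 ≤ ε * s) :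
    cutoffWeight χ ε s = (ε * s)⁻¹ := by
  simp [cutoffWeight, hχ0 _ (hs.trans (le_abs_self _))]

theorem cutoffWeight_nonneg (hχ01 : ∀ t, χ t ∈ Set.Icc (0 : ℝ) 1) (hs : 0 ≤ ε * s) :
    0 ≤ cutoffWeight χ ε s :=
  add_nonneg (hχ01 _).1 (div_nonneg (sub_nonneg.mpr (hχ01 _).2) hs)

theorem cutoffWeight_le_one (hχ01 : ∀ t, χ t ∈ Set.Icc (0 : ℝ) 1)
    (hχ1 : ∀ t : ℝ, |t| ≤ 1 → χ t = 1) (hs : 0 ≤ ε * s) : cutoffWeight χ ε s ≤ 1 := by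
  rcases le_or_gt (ε * s) 1 with hle | hgt
  · exact (cutoffWeight_eq_one hχ1 (by rwa [abs_of_nonneg hs])).le
  · have := div_le_self (sub_nonneg.mpr (hχ01 (ε * s)).2) hgt.le
    unfold cutoffWeight
    linarith

/-- `t f(t) = χ(εt) t + (1 - χ(εt)) / ε` is a convex combination of `t` and `1/ε`. -/
theorem min_le_mul_cutoffWeight (hχ01 : ∀ t, χ t ∈ Set.Icc (0 : ℝ) 1) (hε : 0 < ε)
    {t : ℝ} (ht : 0 < t) : min t (1 / ε) ≤ t * cutoffWeight χ ε t := by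
  obtain ⟨hχ₀, hχ₁⟩ := hχ01 (ε * t)
  have hconv : t * cutoffWeight χ ε t = χ (ε * t) * t + (1 - χ (ε * t)) * (1 / ε) := by
    unfold cutoffWeight
    field_simp
  rw [hconv]
  nlinarith [min_le_left t (1 / ε), min_le_right t (1 / ε)]

theorem continuous_cutoffWeight (hχ : Continuous χ) (hχ1 : ∀ t : ℝ, |t| ≤ 1 → χ t = 1) :
    Continuous (cutoffWeight χ ε) := by
  rw [continuous_iff_continuousAt]
  intro x
  by_cases hx : ε * x = 0
  · have hnear : cutoffWeight χ ε =ᶠ[nhds x] fun _ => 1 := by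
      have hopen : IsOpen {s : ℝ | |ε * s| < 1} :=
        isOpen_lt (continuous_abs.comp (continuous_const_mul ε)) continuous_const
      filter_upwards [hopen.mem_nhds (show |ε * x| < 1 by simp [hx])] with s hs
      exact cutoffWeight_eq_one hχ1 (le_of_lt hs)
    exact continuousAt_const.congr hnear.symm
  · have hlin : Continuous fun s : ℝ => ε * s := continuous_const_mul ε
    have hχε : Continuous fun s => χ (ε * s) := hχ.comp hlin
    exact hχε.continuousAt.add
      ((continuous_const.sub hχε).continuousAt.div hlin.continuousAt hx)

theorem integral_cutoffWeight_nonneg (hχ01 : ∀ t, χ t ∈ Set.Icc (0 : ℝ) 1) (hε : 0 < ε)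
    {t : ℝ} (ht : 0 ≤ t) : 0 ≤ ∫ s in (0 : ℝ)..t, cutoffWeight χ ε s :=
  integral_nonneg ht fun _ hs => cutoffWeight_nonneg hχ01 (mul_nonneg hε.le hs.1)

variable (hχ01 : ∀ t, χ t ∈ Set.Icc (0 : ℝ) 1) (hχ1 : ∀ t : ℝ, |t| ≤ 1 → χ t = 1)
  (hf : Continuous (cutoffWeight χ ε))
include hχ01 hχ1 hf

theorem integral_cutoffWeight_le_self (hε : 0 < ε) {t : ℝ} (ht : 0 ≤ t) :
    ∫ s in (0 : ℝ)..t, cutoffWeight χ ε s ≤ t := by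
  calc ∫ s in (0 : ℝ)..t, cutoffWeight χ ε s ≤ ∫ _ in (0 : ℝ)..t, (1 : ℝ) :=
        integral_mono_on ht (hf.intervalIntegrable _ _) intervalIntegrable_const
          fun s hs => cutoffWeight_le_one hχ01 hχ1 (mul_nonneg hε.le hs.1)
    _ = t := by simp

/-- On `[2/ε, t]` the weight is `1/(εs)`, with integral `log(εt/2)/ε ≤ log(εt)/ε`. -/
theorem integral_cutoffWeight_le_two_add_log (hχ0 : ∀ t : ℝ, 2 ≤ |t| → χ t = 0)
    (hε : 0 < ε) {t : ℝ} (ht : 1 ≤ ε * t) :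
    ∫ s in (0 : ℝ)..t, cutoffWeight χ ε s ≤ (2 + log (ε * t)) / ε := by
  have ht₀ : 0 < t := pos_of_mul_pos_right (by linarith) hε.le
  rcases le_or_gt (ε * t) 2 with hsmall | hlarge
  · calc ∫ s in (0 : ℝ)..t, cutoffWeight χ ε s ≤ t :=
          integral_cutoffWeight_le_self hχ01 hχ1 hf hε ht₀.le
      _ ≤ (2 + log (ε * t)) / ε := by
        rw [le_div_iff₀ hε]
        nlinarith [log_nonneg ht]
  have hmid : 2 / ε ≤ t := by rw [div_le_iff₀ hε]; linarith
  have hhead : ∫ s in (0 : ℝ)..2 / ε, cutoffWeight χ ε s ≤ 2 / ε :=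
    integral_cutoffWeight_le_self hχ01 hχ1 hf hε (by positivity)
  have htail : ∫ s in 2 / ε..t, cutoffWeight χ ε s = ε⁻¹ * log (ε * t / 2) := by
    have hεne : ε ≠ 0 := hε.ne'
    rw [integral_congr (g := fun s => (ε * s)⁻¹),
      integral_comp_mul_left (fun x => x⁻¹) hεne, mul_div_cancel₀ _ hεne,
      integral_inv_of_pos two_pos (by linarith), smul_eq_mul]
    intro s hs
    rw [Set.uIcc_of_le hmid] at hs
    refine cutoffWeight_eq_inv hχ0 ?_
    have := (div_le_iff₀' hε).mp hs.1
    linarith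
  have hlog : log (ε * t / 2) ≤ log (ε * t) := log_le_log (by positivity) (by linarith)
  rw [← integral_add_adjacent_intervals (hf.intervalIntegrable 0 (2 / ε))
    (hf.intervalIntegrable _ t), htail, add_div, div_eq_inv_mul (log _)]
  gcongr

theorem sq_integral_cutoffWeight_le (hχ0 : ∀ t : ℝ, 2 ≤ |t| → χ t = 0) (hε : 0 < ε)
    {t : ℝ} (ht : 1 ≤ ε * t) : (∫ s in (0 : ℝ)..t, cutoffWeight χ ε s) ^ 2 ≤ 4 * t / ε :=
  calc (∫ s in (0 : ℝ)..t, cutoffWeight χ ε s) ^ 2 ≤ ((2 + log (ε * t)) / ε) ^ 2 := by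
        gcongr
        · exact integral_cutoffWeight_nonneg hχ01 hε
            (pos_of_mul_pos_right (by linarith) hε.le).le
        · exact integral_cutoffWeight_le_two_add_log hχ01 hχ1 hf hχ0 hε ht
    _ = (2 + log (ε * t)) ^ 2 / ε ^ 2 := div_pow _ _ _
    _ ≤ 4 * (ε * t) / ε ^ 2 := by gcongr; exact sq_two_add_log_le ht
    _ = 4 * t / ε := by field_simp

end cutoffWeight

theorem weight_deriv_vs_square_general
    (χ : ℝ → ℝ) (hχC1 : ContDiff ℝ 1 χ)
    (hχ01 : ∀ t, χ t ∈ Set.Icc (0 : ℝ) 1)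
    (hχ1 : ∀ t : ℝ, |t| ≤ 1 → χ t = 1)
    (hχ0 : ∀ t : ℝ, 2 ≤ |t| → χ t = 0)
    (ε : ℝ) (hε : 0 < ε)
    (q : ℝ → ℝ)
    (hq : ∀ t, q t = ∫ s in (0:ℝ)..t, (χ (ε * s) + (1 - χ (ε * s)) / (ε * s))) :
    ∀ t > 0, ∀ d : ℝ, HasDerivAt q d t → t * d ≥ (1 / 4) * (q t) ^ 2 / t := by
  intro t ht d hd
  have hf := continuous_cutoffWeight (ε := ε) hχC1.continuous hχ1
  have hqf : q = fun u => ∫ s in (0 : ℝ)..u, cutoffWeight χ ε s := funext hq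
  have hd : d = cutoffWeight χ ε t :=
    hd.unique (hqf ▸ (hf.integral_hasStrictDerivAt 0 t).hasDerivAt)
  have hmin : min t (1 / ε) ≤ t * d := hd ▸ min_le_mul_cutoffWeight hχ01 hε ht
  have hq₀ : 0 ≤ q t := hq t ▸ integral_cutoffWeight_nonneg hχ01 hε ht.le
  rw [ge_iff_le, div_le_iff₀ ht]
  rcases le_or_gt (ε * t) 1 with hsmall | hlarge
  · have htd : t ≤ t * d := (le_min le_rfl ((le_div_iff₀ hε).mpr (by linarith))).trans hmin
    have hqt : q t ≤ t := hq t ▸ integral_cutoffWeight_le_self hχ01 hχ1 hf hε ht.le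
    nlinarith
  · have htd : 1 / ε ≤ t * d :=
      (le_min ((div_le_iff₀ hε).mpr (by linarith)) le_rfl).trans hmin
    have hq2 : q t ^ 2 ≤ 4 * (t * (1 / ε)) := by
      rw [mul_one_div, ← mul_div_assoc]
      exact hq t ▸ sq_integral_cutoffWeight_le hχ01 hχ1 hf hχ0 hε hlarge.le
    nlinarith [mul_le_mul_of_nonneg_left htd ht.le]

theorem weight_deriv_vs_square
    (χ : ℝ → ℝ) (hχC1 : ContDiff ℝ 1 χ)
    (hχ01 : ∀ t, χ t ∈ Set.Icc (0 : ℝ) 1)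
    (hχ1 : ∀ t : ℝ, |t| ≤ 1 → χ t = 1)
    (hχ0 : ∀ t : ℝ, 2 ≤ |t| → χ t = 0)
    (hχ' : ∀ t, t * deriv χ t ≤ 0)
    (ε : ℝ) (hε : 0 < ε)
    (q : ℝ → ℝ)
    (hq : ∀ t, q t = ∫ s in (0:ℝ)..t, (χ (ε * s) + (1 - χ (ε * s)) / (ε * s))) :
    ∀ t > 0, ∀ d : ℝ, HasDerivAt q d t → t * d ≥ (1 / 4) * (q t) ^ 2 / t :=
  weight_deriv_vs_square_general χ hχC1 hχ01 hχ1 hχ0 ε hε q hq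
end

section
/- Fix 0 < δ < 1 and x, y, ξ, η ∈ ℝⁿ. If |ξ/⟨ξ⟩ − η/⟨η⟩| > δ or |x − y| > δ, then |ξ − η|² + ⟨ξ⟩⟨η⟩|x − y|² ≥ (δ²/16)(⟨ξ⟩ + ⟨η⟩)². -/
/-!
With `⟨ζ⟩ = √(1 + ‖ζ‖²)`, the bracket is 1-Lipschitz and dominates `‖ζ‖`. Since
`⟨ξ⟩ (ξ/⟨ξ⟩ - η/⟨η⟩) = (ξ - η) + ((⟨η⟩ - ⟨ξ⟩)/⟨η⟩) η` has norm at most `2‖ξ - η‖`, and symmetrically,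
frequency separation gives `δ (⟨ξ⟩ + ⟨η⟩) ≤ 4‖ξ - η‖`. Spatial separation is handled by
`(⟨ξ⟩ + ⟨η⟩)² = (⟨ξ⟩ - ⟨η⟩)² + 4⟨ξ⟩⟨η⟩`, where `(⟨ξ⟩ - ⟨η⟩)² ≤ ‖ξ - η‖²` and
`4⟨ξ⟩⟨η⟩ δ²/16 ≤ ⟨ξ⟩⟨η⟩‖x - y‖²`.
-/

open Real

noncomputable def japaneseBracket {E : Type*} [SeminormedAddCommGroup E] (ζ : E) : ℝ :=
  √(1 + ‖ζ‖ ^ 2)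

section JapaneseBracket

variable {E : Type*} [SeminormedAddCommGroup E]

theorem sq_japaneseBracket (ζ : E) : japaneseBracket ζ ^ 2 = 1 + ‖ζ‖ ^ 2 :=
  sq_sqrt (by positivity)

theorem one_le_japaneseBracket (ζ : E) : 1 ≤ japaneseBracket ζ :=
  one_le_sqrt.mpr (by linarith [sq_nonneg ‖ζ‖])

theorem japaneseBracket_pos (ζ : E) : 0 < japaneseBracket ζ :=
  one_pos.trans_le (one_le_japaneseBracket ζ)

theorem norm_le_japaneseBracket (ζ : E) : ‖ζ‖ ≤ japaneseBracket ζ :=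
  le_sqrt_of_sq_le (by linarith)

theorem abs_japaneseBracket_sub_le (ξ η : E) :
    |japaneseBracket ξ - japaneseBracket η| ≤ ‖ξ - η‖ := by
  have hsum_pos := add_pos (japaneseBracket_pos ξ) (japaneseBracket_pos η)
  have hdiff : (japaneseBracket ξ - japaneseBracket η) * (japaneseBracket ξ + japaneseBracket η)
      = (‖ξ‖ - ‖η‖) * (‖ξ‖ + ‖η‖) := by
    linear_combination sq_japaneseBracket ξ - sq_japaneseBracket η
  refine le_of_mul_le_mul_right ?_ hsum_pos
  calc |japaneseBracket ξ - japaneseBracket η| * (japaneseBracket ξ + japaneseBracket η)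
      = |‖ξ‖ - ‖η‖| * (‖ξ‖ + ‖η‖) := by
        rw [← abs_of_pos hsum_pos, ← abs_mul, hdiff, abs_mul,
          abs_of_nonneg (add_nonneg (norm_nonneg ξ) (norm_nonneg η))]
    _ ≤ ‖ξ - η‖ * (japaneseBracket ξ + japaneseBracket η) :=
        mul_le_mul (abs_norm_sub_norm_le ξ η)
          (add_le_add (norm_le_japaneseBracket ξ) (norm_le_japaneseBracket η))
          (by positivity) (norm_nonneg _)

variable [NormedSpace ℝ E]

theorem norm_inv_smul_sub_inv_smul_mul_le {a b : ℝ} {ξ η : E} (ha : 0 < a) (hb : 0 < b)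
    (hη : ‖η‖ ≤ b) (hab : |a - b| ≤ ‖ξ - η‖) :
    ‖a⁻¹ • ξ - b⁻¹ • η‖ * a ≤ 2 * ‖ξ - η‖ := by
  have hdecomp : a • (a⁻¹ • ξ - b⁻¹ • η) = (ξ - η) + ((b - a) / b) • η := by
    rw [smul_sub, smul_smul, smul_smul, mul_inv_cancel₀ ha.ne', one_smul, sub_div,
      div_self hb.ne']
    module
  have hcoef : ‖((b - a) / b) • η‖ ≤ ‖ξ - η‖ := by
    rw [norm_smul, norm_div, Real.norm_eq_abs, Real.norm_eq_abs, abs_of_pos hb, abs_sub_comm,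
      div_mul_eq_mul_div, div_le_iff₀ hb]
    exact mul_le_mul hab hη (norm_nonneg _) (norm_nonneg _)
  calc ‖a⁻¹ • ξ - b⁻¹ • η‖ * a = ‖a • (a⁻¹ • ξ - b⁻¹ • η)‖ := by
        rw [norm_smul, Real.norm_eq_abs, abs_of_pos ha, mul_comm]
    _ ≤ ‖ξ - η‖ + ‖((b - a) / b) • η‖ := hdecomp ▸ norm_add_le _ _
    _ ≤ 2 * ‖ξ - η‖ := by linarith

theorem mul_japaneseBracket_add_le_of_lt_norm_sub {δ : ℝ} {ξ η : E}
    (h : δ < ‖(japaneseBracket ξ)⁻¹ • ξ - (japaneseBracket η)⁻¹ • η‖) :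
    δ * (japaneseBracket ξ + japaneseBracket η) ≤ 4 * ‖ξ - η‖ := by
  have hξ := norm_inv_smul_sub_inv_smul_mul_le (japaneseBracket_pos ξ) (japaneseBracket_pos η)
    (norm_le_japaneseBracket η) (abs_japaneseBracket_sub_le ξ η)
  have hη := norm_inv_smul_sub_inv_smul_mul_le (japaneseBracket_pos η) (japaneseBracket_pos ξ)
    (norm_le_japaneseBracket ξ) (abs_japaneseBracket_sub_le η ξ)
  rw [norm_sub_rev, norm_sub_rev η] at hη
  have := mul_le_mul_of_nonneg_right h.le
    (add_pos (japaneseBracket_pos ξ) (japaneseBracket_pos η)).le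
  linarith

end JapaneseBracket

theorem sq_div_sixteen_mul_add_sq_le {a b δ : ℝ} (hab : 0 ≤ a * b) (hδ : δ ^ 2 ≤ 16) :
    δ ^ 2 / 16 * (a + b) ^ 2 ≤ (a - b) ^ 2 + a * b * δ ^ 2 := by
  have hsplit : (a + b) ^ 2 = (a - b) ^ 2 + 4 * (a * b) := by ring
  rw [hsplit]
  nlinarith [mul_le_mul_of_nonneg_right hδ (sq_nonneg (a - b)), mul_nonneg hab (sq_nonneg δ)]

theorem phase_space_separation
    (n : ℕ) (δ : ℝ) (hδ0 : 0 < δ) (hδ1 : δ < 1)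
    (x y ξ η : EuclideanSpace ℝ (Fin n))
    (jap : EuclideanSpace ℝ (Fin n) → ℝ)
    (hjap : ∀ ζ, jap ζ = Real.sqrt (1 + ‖ζ‖ ^ 2))
    (h : ‖(jap ξ)⁻¹ • ξ - (jap η)⁻¹ • η‖ > δ ∨ ‖x - y‖ > δ) :
    ‖ξ - η‖ ^ 2 + jap ξ * jap η * ‖x - y‖ ^ 2 ≥
      (δ ^ 2 / 16) * (jap ξ + jap η) ^ 2 := by
  obtain rfl : jap = japaneseBracket := funext hjap
  have hprod := (mul_pos (japaneseBracket_pos ξ) (japaneseBracket_pos η)).le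
  rcases h with hfreq | hspace
  · have hlin := mul_japaneseBracket_add_le_of_lt_norm_sub hfreq
    have hsq := pow_le_pow_left₀
      (mul_nonneg hδ0.le (add_pos (japaneseBracket_pos ξ) (japaneseBracket_pos η)).le) hlin 2
    linarith [mul_nonneg hprod (sq_nonneg ‖x - y‖)]
  · have hbracket := abs_le.mp (abs_japaneseBracket_sub_le ξ η)
    have hbracket_sq := sq_le_sq' hbracket.1 hbracket.2
    have hspace_sq := pow_le_pow_left₀ hδ0.le hspace.le 2
    have := sq_div_sixteen_mul_add_sq_le hprod (by nlinarith : δ ^ 2 ≤ 16)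
    linarith [mul_le_mul_of_nonneg_left hspace_sq hprod]
end
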